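/- Let (X,d) be a length space, Ω ⊂ X open, f: Ω → ℝ continuous with f ≥ 0, and u: Ω → ℝ continuous. If u satisfies the curve-based subsolution property u(ξ(t₁)) ≤ ∫_{t₁}^{t₂} f(ξ(s)) ds + u(ξ(t₂)) for all 1-Lipschitz curves ξ in Ω and t₁ < t₂, then |∇⁻u|(x₀) ≤ f(x₀) for every x₀ ∈ Ω. -/

import Mathlib

/-!
Fix `c > f x₀` and an intermediate `m` with `max (f x₀) 0 < m < c`; near `x₀` we have `f < m`.
For `y` close to `x₀`, the length-space property gives a 1-Lipschitz curve from `x₀` to `y` of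
length `T ≤ (c / m) · d(x₀, y)`, and clamping its parameter to `[0, T]` keeps it in the region
where `f < m`. The curve subsolution inequality then bounds `u x₀ - u y` by `m T ≤ c · d(x₀, y)`,
so the sub-slope at `x₀` is at most `c`.
-/

open Filter Topology Set

/-- Sub-slope `|∇⁻u|(x) = limsup_{y→x} max{u(x)−u(y),0}/d(x,y)`. -/
noncomputable def subSlope {X : Type*} [MetricSpace X] (u : X → ℝ) (x : X) : ℝ :=
  Filter.limsup (fun y => max (u x - u y) 0 / dist x y) (𝓝[≠] x)

open Metric

def IsLengthSpace (X : Type*) [PseudoMetricSpace X] : Prop :=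
  ∀ x y : X, ∀ ε > (0 : ℝ), ∃ ξ : ℝ → X, LipschitzWith 1 ξ ∧ ξ 0 = x ∧
    ∃ T : ℝ, 0 ≤ T ∧ T ≤ dist x y + ε ∧ ξ T = y

def IsCurveSubsolution {X : Type*} [PseudoMetricSpace X] (Ω : Set X) (f u : X → ℝ) : Prop :=
  ∀ ξ : ℝ → X, LipschitzWith 1 ξ → (∀ t : ℝ, ξ t ∈ Ω) →
    ∀ t₁ t₂ : ℝ, t₁ < t₂ → u (ξ t₁) ≤ (∫ s in t₁..t₂, f (ξ s)) + u (ξ t₂)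

section Curves

variable {X : Type*} [PseudoMetricSpace X]

theorem LipschitzWith.exists_clamp {ξ : ℝ → X} (hξ : LipschitzWith 1 ξ) {T : ℝ} (hT : 0 ≤ T) :
    ∃ η : ℝ → X, LipschitzWith 1 η ∧ η 0 = ξ 0 ∧ η T = ξ T ∧
      ∀ t, η t ∈ closedBall (ξ 0) T := by
  refine ⟨(ξ ∘ Subtype.val) ∘ projIcc 0 T hT, ?_, by simp [projIcc_left], by simp [projIcc_right],
    fun t => ?_⟩
  · simpa only [mul_one] using
      (hξ.comp (LipschitzWith.subtype_val _)).comp (LipschitzWith.projIcc hT)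
  · obtain ⟨hs0, hsT⟩ := (projIcc 0 T hT t).2
    rw [mem_closedBall]
    calc dist (ξ (projIcc 0 T hT t)) (ξ 0) ≤ dist (projIcc 0 T hT t : ℝ) 0 := by
          simpa using hξ.dist_le_mul (projIcc 0 T hT t) 0
      _ ≤ T := by rwa [Real.dist_eq, sub_zero, abs_of_nonneg hs0]

theorem IsLengthSpace.exists_curve (hX : IsLengthSpace X) (x y : X) {ε : ℝ} (hε : 0 < ε) :
    ∃ (η : ℝ → X) (T : ℝ), LipschitzWith 1 η ∧ η 0 = x ∧ η T = y ∧
      dist x y ≤ T ∧ T ≤ dist x y + ε ∧ ∀ t, η t ∈ closedBall x T := by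
  obtain ⟨ξ, hξ, rfl, T, hT0, hTε, rfl⟩ := hX x y ε hε
  obtain ⟨η, hη, hη0, hηT, hball⟩ := hξ.exists_clamp hT0
  refine ⟨η, T, hη, hη0, hηT, ?_, hTε, hball⟩
  simpa [abs_of_nonneg hT0] using hξ.dist_le_mul 0 T

theorem IsCurveSubsolution.sub_le_mul {Ω : Set X} {f u : X → ℝ} (hsub : IsCurveSubsolution Ω f u)
    (hf : ContinuousOn f Ω) {ξ : ℝ → X} (hξ : LipschitzWith 1 ξ) (hξΩ : ∀ t, ξ t ∈ Ω)
    {m T : ℝ} (hfm : ∀ t, f (ξ t) ≤ m) (hT : 0 < T) :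
    u (ξ 0) - u (ξ T) ≤ m * T := by
  have hint : ∫ s in (0 : ℝ)..T, f (ξ s) ≤ ∫ _ in (0 : ℝ)..T, m :=
    intervalIntegral.integral_mono_on hT.le
      ((hf.comp_continuous hξ.continuous hξΩ).intervalIntegrable 0 T) intervalIntegrable_const
      fun t _ => hfm t
  rw [intervalIntegral.integral_const, smul_eq_mul, sub_zero] at hint
  linarith [hsub ξ hξ hξΩ 0 T hT]

end Curves

theorem IsCurveSubsolution.eventually_sub_le {X : Type*} [MetricSpace X] {Ω : Set X}
    {f u : X → ℝ} (hsub : IsCurveSubsolution Ω f u) (hX : IsLengthSpace X) (hΩ : IsOpen Ω)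
    (hf : ContinuousOn f Ω) {x₀ : X} (hx₀ : x₀ ∈ Ω) {c : ℝ} (hc : f x₀ < c) (hc0 : 0 < c) :
    ∀ᶠ y in 𝓝 x₀, u x₀ - u y ≤ c * dist x₀ y := by
  obtain ⟨m, hm, hmc⟩ := exists_between (max_lt hc hc0)
  have hm0 : 0 < m := (le_max_right _ _).trans_lt hm
  have hnear : ∀ᶠ z in 𝓝 x₀, f z < m ∧ z ∈ Ω :=
    (hf.continuousAt (hΩ.mem_nhds hx₀) |>.eventually_lt continuousAt_const
      ((le_max_left _ _).trans_lt hm)).and (hΩ.mem_nhds hx₀)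
  obtain ⟨δ, hδ, hδnear⟩ := Metric.eventually_nhds_iff_ball.mp hnear
  filter_upwards [ball_mem_nhds x₀ (by positivity : 0 < m * δ / c)] with y hy
  rcases eq_or_ne y x₀ with rfl | hyx
  · simp
  have hd : 0 < dist x₀ y := dist_pos.mpr hyx.symm
  obtain ⟨η, T, hη, hη0, hηT, hdT, hTd, hball⟩ :=
    hX.exists_curve x₀ y (mul_pos (sub_pos.mpr ((one_lt_div hm0).mpr hmc)) hd)
  have hmT : m * T ≤ c * dist x₀ y := by
    calc m * T ≤ m * (dist x₀ y + (c / m - 1) * dist x₀ y) := by gcongr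
      _ = c * dist x₀ y := by field_simp; ring
  have hTδ : T < δ := by
    have : c * dist x₀ y < m * δ := by
      rw [mem_ball, dist_comm, lt_div_iff₀ hc0] at hy; linarith
    exact lt_of_mul_lt_mul_left (hmT.trans_lt this) hm0.le
  have hηnear : ∀ t, f (η t) < m ∧ η t ∈ Ω := fun t =>
    hδnear _ (closedBall_subset_ball hTδ (hball t))
  calc u x₀ - u y = u (η 0) - u (η T) := by rw [hη0, hηT]
    _ ≤ m * T :=
        hsub.sub_le_mul hf hη (fun t => (hηnear t).2) (fun t => (hηnear t).1.le) (hd.trans_le hdT)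
    _ ≤ c * dist x₀ y := hmT

theorem subSlope_le_of_eventually_sub_le {X : Type*} [MetricSpace X] {u : X → ℝ} {x : X} {c : ℝ}
    (hc : 0 ≤ c) (h : ∀ᶠ y in 𝓝 x, u x - u y ≤ c * dist x y) : subSlope u x ≤ c := by
  rcases eq_or_neBot (𝓝[≠] x) with hbot | hne
  -- at an isolated point the `limsup` is over `⊥`, whose junk value in `ℝ` is `sInf univ = 0`
  · simpa [subSlope, hbot, limsup_eq, Real.sInf_of_not_bddBelow not_bddBelow_univ] using hc
  refine limsup_le_of_le (isCoboundedUnder_le_of_eventually_le _ (x := 0)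
    (Eventually.of_forall fun y => by positivity)) ?_
  filter_upwards [nhdsWithin_le_nhds h, self_mem_nhdsWithin] with y hy hyx
  rw [div_le_iff₀ (dist_pos.mpr (Ne.symm hyx)), dist_comm]
  exact max_le (by rwa [dist_comm]) (by positivity)

theorem c_subsolution_is_monge_subsolution_general {X : Type*} [MetricSpace X]
    (hlen : ∀ x y : X, ∀ ε > (0 : ℝ), ∃ ξ : ℝ → X, LipschitzWith 1 ξ ∧ ξ 0 = x ∧
      ∃ T : ℝ, 0 ≤ T ∧ T ≤ dist x y + ε ∧ ξ T = y)
    (Ω : Set X) (hΩ : IsOpen Ω) (f u : X → ℝ)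
    (hf : ContinuousOn f Ω) (hf0 : ∀ x ∈ Ω, 0 ≤ f x)
    (hsub : ∀ ξ : ℝ → X, LipschitzWith 1 ξ → (∀ t : ℝ, ξ t ∈ Ω) →
      ∀ t₁ t₂ : ℝ, t₁ < t₂ → u (ξ t₁) ≤ (∫ s in t₁..t₂, f (ξ s)) + u (ξ t₂)) :
    ∀ x₀ ∈ Ω, subSlope u x₀ ≤ f x₀ := by
  intro x₀ hx₀
  refine le_of_forall_gt_imp_ge_of_dense fun c hc => ?_
  have hc0 : 0 < c := (hf0 x₀ hx₀).trans_lt hc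
  exact subSlope_le_of_eventually_sub_le hc0.le
    (IsCurveSubsolution.eventually_sub_le hsub hlen hΩ hf hx₀ hc hc0)

/-- in a length space, a continuous function satisfying the
curve-based subsolution property of the eikonal equation `|∇u| = f`
satisfies `|∇⁻u|(x₀) ≤ f(x₀)` at every point of `Ω` (Monge subsolution). -/
theorem c_subsolution_is_monge_subsolution {X : Type*} [MetricSpace X]
    (hlen : ∀ x y : X, ∀ ε > (0 : ℝ), ∃ ξ : ℝ → X, LipschitzWith 1 ξ ∧ ξ 0 = x ∧
      ∃ T : ℝ, 0 ≤ T ∧ T ≤ dist x y + ε ∧ ξ T = y)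
    (Ω : Set X) (hΩ : IsOpen Ω) (f u : X → ℝ)
    (hf : ContinuousOn f Ω) (hf0 : ∀ x ∈ Ω, 0 ≤ f x)
    (hu : ContinuousOn u Ω)
    (hsub : ∀ ξ : ℝ → X, LipschitzWith 1 ξ → (∀ t : ℝ, ξ t ∈ Ω) →
      ∀ t₁ t₂ : ℝ, t₁ < t₂ → u (ξ t₁) ≤ (∫ s in t₁..t₂, f (ξ s)) + u (ξ t₂)) :
    ∀ x₀ ∈ Ω, subSlope u x₀ ≤ f x₀ :=
  c_subsolution_is_monge_subsolution_general hlen Ω hΩ f u hf hf0 hsub
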